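/- arXiv:math/0501104 — 5 statements merged into one kernel-verified Lean document; each statement's English description precedes it below -/
import Mathlib

section
/- For a bounded polyhedral region P in M_ℝ ≅ ℝ^n (an intersection of finitely many closed and open rational half-spaces), the limit as m → ∞ of #(mP ∩ M) / (m^n / n!) exists and equals n! times the Euclidean volume of P (i.e., the volume normalized so the smallest lattice simplex has unit volume). -/
open Filter Topology MeasureTheory Pointwise

/-
A region cut out by finitely many open and closed half-spaces is convex, so its boundary is
Lebesgue-null; it is also measurable. For a bounded measurable set whose frontier is null,
`#(mP ∩ ℤⁿ) / mⁿ` is a Riemann sum of the indicator of `P` on the grid `m⁻¹ℤⁿ`, and these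
converge to the volume of `P` (`tendsto_card_div_pow_atTop_volume`).
-/

section HalfSpaces

variable {E ι : Type*} (f : ι → E → ℝ) (c : ι → ℝ) (S : Set ι)

theorem convex_setOf_lt_and_le [AddCommGroup E] [Module ℝ E] (hf : ∀ i, IsLinearMap ℝ (f i)) :
    Convex ℝ {x | (∀ i ∈ S, f i x < c i) ∧ ∀ i ∉ S, c i ≤ f i x} := by
  simp only [Set.ofPred_and, Set.ofPred_forall]
  exact .inter (convex_iInter fun i => convex_iInter fun _ => convex_halfSpace_lt (hf i) _)
    (convex_iInter fun i => convex_iInter fun _ => convex_halfSpace_ge (hf i) _)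

theorem measurableSet_setOf_lt_and_le [MeasurableSpace E] [Countable ι]
    (hf : ∀ i, Measurable (f i)) :
    MeasurableSet {x | (∀ i ∈ S, f i x < c i) ∧ ∀ i ∉ S, c i ≤ f i x} := by
  simp only [Set.ofPred_and, Set.ofPred_forall]
  exact .inter (.iInter fun i => .iInter fun _ => measurableSet_lt (hf i) measurable_const)
    (.iInter fun i => .iInter fun _ => measurableSet_le measurable_const (hf i))

end HalfSpaces

section LatticeCount

variable {ι : Type*} [Fintype ι]

open BoxIntegral.unitPartition in
theorem card_intPoints_smul_eq_card_inter_inv_smul_span (s : Set (ι → ℝ)) (m : ℕ) [NeZero m] :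
    Nat.card {u : ι → ℤ | (fun j => (u j : ℝ)) ∈ (m : ℝ) • s} =
      Nat.card ↑(s ∩
        (m : ℝ)⁻¹ • (Submodule.span ℤ (Set.range (Pi.basisFun ℝ ι)) : Set (ι → ℝ))) := by
  have hm : (m : ℝ) ≠ 0 := NeZero.ne _
  rw [← Submodule.coe_pointwise_smul]
  refine Nat.card_eq_of_bijective (fun u => ⟨(m : ℝ)⁻¹ • fun j => (u.1 j : ℝ),
      (Set.mem_smul_set_iff_inv_smul_mem₀ hm _ _).1 u.2,
      mem_smul_span_iff.2 fun i => ⟨u.1 i, by simp [hm]⟩⟩) ⟨fun u u' h => ?_, ?_⟩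
  · ext j
    simpa [hm] using congr_fun (congr_arg Subtype.val h) j
  · rintro ⟨x, hxs, hx⟩
    choose u hu using mem_smul_span_iff.1 hx
    have hx : x = (m : ℝ)⁻¹ • fun j => (u j : ℝ) := by
      ext j
      rw [Pi.smul_apply, smul_eq_mul, ← eq_intCast (algebraMap ℤ ℝ), hu, inv_mul_cancel_left₀ hm]
    subst hx
    exact ⟨⟨u, (Set.mem_smul_set_iff_inv_smul_mem₀ hm _ _).2 hxs⟩, rfl⟩

theorem tendsto_card_intPoints_smul_div_pow {s : Set (ι → ℝ)} (hb : Bornology.IsBounded s)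
    (hs : MeasurableSet s) (hfr : volume (frontier s) = 0) :
    Tendsto (fun m : ℕ => (Nat.card {u : ι → ℤ | (fun j => (u j : ℝ)) ∈ (m : ℝ) • s} : ℝ) /
      (m : ℝ) ^ Fintype.card ι) atTop (𝓝 (volume.real s)) := by
  refine (tendsto_card_div_pow_atTop_volume s hb hs hfr).congr' ?_
  filter_upwards [eventually_ne_atTop 0] with m hm
  have : NeZero m := ⟨hm⟩
  rw [card_intPoints_smul_eq_card_inter_inv_smul_span]

end LatticeCount

/-- For a bounded polyhedral region `P ⊆ ℝ^n` cut out by finitely many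
closed and open rational half-spaces (closedness recorded by the complement of `S`),
the limit of `#(mP ∩ ℤ^n) / (m^n / n!)` as `m → ∞` exists and equals `n!` times the
Euclidean volume of `P`. -/
theorem lattice_points_asymptotics_eq_normalized_volume
    (n r : ℕ) (v : Fin r → Fin n → ℤ) (d : Fin r → ℤ) (S : Finset (Fin r))
    (P : Set (Fin n → ℝ))
    (hP : P = {u : Fin n → ℝ |
        (∀ i, i ∈ S → ∑ j, u j * (v i j : ℝ) < -(d i : ℝ)) ∧
        (∀ i, i ∉ S → -(d i : ℝ) ≤ ∑ j, u j * (v i j : ℝ))})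
    (hbdd : Bornology.IsBounded P) :
    Tendsto
      (fun m : ℕ =>
        (Nat.card {u : Fin n → ℤ | (fun j => (u j : ℝ)) ∈ (m : ℝ) • P} : ℝ) /
          ((m : ℝ) ^ n / (n.factorial : ℝ)))
      atTop (𝓝 ((n.factorial : ℝ) * (volume P).toReal)) := by
  have hlin (i : Fin r) : IsLinearMap ℝ fun u : Fin n → ℝ => ∑ j, u j * (v i j : ℝ) :=
    ((dotProductBilin ℝ ℝ).flip _).isLinear
  have hconv : Convex ℝ P := hP ▸ convex_setOf_lt_and_le _ (fun i => -(d i : ℝ)) S hlin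
  have hmeas : MeasurableSet P := hP ▸ measurableSet_setOf_lt_and_le
    (fun i (u : Fin n → ℝ) => ∑ j, u j * (v i j : ℝ)) (fun i => -(d i : ℝ)) S fun i => by fun_prop
  have hlim := (tendsto_card_intPoints_smul_div_pow hbdd hmeas
    (hconv.addHaar_frontier volume)).const_mul (n.factorial : ℝ)
  rw [Fintype.card_fin] at hlim
  refine hlim.congr fun m => ?_
  rw [div_div_eq_mul_div]
  ring
end

section
/- Let v_1, ..., v_r be nonzero vectors in ℝ^n spanning ℝ^n, I ⊆ {1,...,r}, and for real numbers d_1, ..., d_r define P_{d,I} = {u ∈ ℝ^n : ⟨u, v_i⟩ ≥ -d_i if and only if i ∈ I}. Then whether P_{d,I} is bounded is independent of the choice of d whenever P_{d,I} is nonempty; more precisely, P_{d,I} is unbounded for some choice of d making it nonempty if and only if there exists a nonzero w ∈ ℝ^n with ⟨w, v_i⟩ ≥ 0 for all i ∈ I and ⟨w, v_i⟩ ≤ 0 for all i ∉ I. -/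
/-! A point `u` of the region stays in it along every ray `u + t • w`, `t ≥ 0`, whose direction
`w` lies in the cone `{w | 0 ≤ f i w for i ∈ I, f i w ≤ 0 for i ∉ I}`, so a nonempty region with a
nonzero such `w` is unbounded. Conversely, in an unbounded region pick points `x k` escaping to
infinity; a limit `a` of the unit vectors `x k / ‖x k‖` (the unit sphere is compact) lies in the
cone, because dividing `c i ≤ f i (x k)` or `f i (x k) < c i` by `‖x k‖` sends the constant to `0`.
The cone does not involve `c`, hence neither does the boundedness of a nonempty region. -/

open Filter Topology Bornology

section MixedRegion

variable {ι E : Type*} [NormedAddCommGroup E] [NormedSpace ℝ E]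

def mixedRegion (f : ι → StrongDual ℝ E) (I : Set ι) (c : ι → ℝ) : Set E :=
  {u | ∀ i, i ∈ I ↔ c i ≤ f i u}

def mixedRecessionCone (f : ι → StrongDual ℝ E) (I : Set ι) : Set E :=
  {w | (∀ i ∈ I, 0 ≤ f i w) ∧ ∀ i ∉ I, f i w ≤ 0}

theorem add_smul_mem_mixedRegion {f : ι → StrongDual ℝ E} {I : Set ι} {c : ι → ℝ} {u w : E}
    {t : ℝ} (hu : u ∈ mixedRegion f I c) (hw : w ∈ mixedRecessionCone f I) (ht : 0 ≤ t) :
    u + t • w ∈ mixedRegion f I c := by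
  intro i
  rw [map_add, map_smul, smul_eq_mul]
  by_cases hi : i ∈ I
  · have := mul_nonneg ht (hw.1 i hi)
    simp only [hi, true_iff]
    linarith [(hu i).mp hi]
  · have := mul_nonpos_of_nonneg_of_nonpos ht (hw.2 i hi)
    simp only [hi, false_iff, not_le]
    linarith [not_le.mp (mt (hu i).mpr hi)]

theorem not_isBounded_of_forall_add_smul_mem {S : Set E} {u w : E} (hw : w ≠ 0)
    (hray : ∀ t : ℝ, 0 ≤ t → u + t • w ∈ S) : ¬ IsBounded S := by
  intro hS
  obtain ⟨R, hR⟩ := (Metric.isBounded_iff_subset_closedBall u).mp hS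
  have hw' : 0 < ‖w‖ := norm_pos_iff.mpr hw
  set t := (|R| + 1) / ‖w‖
  have ht : 0 ≤ t := by positivity
  have hdist : dist (u + t • w) u = |R| + 1 := by
    rw [dist_self_add_left, norm_smul, Real.norm_of_nonneg ht, div_mul_cancel₀ _ hw'.ne']
  have := Metric.mem_closedBall.mp (hR (hray t ht))
  linarith [le_abs_self R]

theorem exists_tendsto_inv_norm_smul_of_not_isBounded [FiniteDimensional ℝ E] {S : Set E}
    (hS : ¬ IsBounded S) :
    ∃ x : ℕ → E, ∃ a : E, a ≠ 0 ∧ (∀ k, x k ∈ S) ∧ Tendsto (‖x ·‖) atTop atTop ∧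
      Tendsto (fun k ↦ ‖x k‖⁻¹ • x k) atTop (𝓝 a) := by
  have hlarge : ∀ k : ℕ, ∃ y ∈ S, (k : ℝ) + 1 ≤ ‖y‖ := by
    intro k
    by_contra! h
    exact hS (isBounded_iff_forall_norm_le.mpr ⟨k + 1, fun y hy ↦ (h y hy).le⟩)
  choose y hyS hy using hlarge
  have hy0 : ∀ k, y k ≠ 0 := fun k ↦ norm_pos_iff.mp (by linarith [hy k, k.cast_nonneg (α := ℝ)])
  have hsphere : ∀ k, ‖y k‖⁻¹ • y k ∈ Metric.sphere (0 : E) 1 := fun k ↦ by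
    rw [mem_sphere_zero_iff_norm, norm_smul, norm_inv, norm_norm,
      inv_mul_cancel₀ (norm_ne_zero_iff.mpr (hy0 k))]
  obtain ⟨a, ha, φ, hφ, hlim⟩ := (isCompact_sphere (0 : E) 1).tendsto_subseq hsphere
  have hnorm : Tendsto (‖y ·‖) atTop atTop :=
    tendsto_atTop_mono hy (tendsto_atTop_add_const_right _ 1 tendsto_natCast_atTop_atTop)
  exact ⟨y ∘ φ, a, ne_zero_of_mem_unit_sphere ⟨a, ha⟩, fun k ↦ hyS (φ k),
    hnorm.comp hφ.tendsto_atTop, hlim⟩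

theorem nonneg_of_forall_le_of_tendsto_inv_norm_smul {g : StrongDual ℝ E} {c : ℝ} {x : ℕ → E}
    {a : E} (hc : ∀ k, c ≤ g (x k)) (hnorm : Tendsto (‖x ·‖) atTop atTop)
    (ha : Tendsto (fun k ↦ ‖x k‖⁻¹ • x k) atTop (𝓝 a)) : 0 ≤ g a := by
  have hlower : Tendsto (fun k ↦ ‖x k‖⁻¹ * c) atTop (𝓝 0) := by
    simpa using (tendsto_inv_atTop_zero.comp hnorm).mul_const c
  refine le_of_tendsto_of_tendsto' hlower ((g.continuous.tendsto a).comp ha) fun k ↦ ?_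
  simp only [Function.comp_apply, map_smul, smul_eq_mul]
  exact mul_le_mul_of_nonneg_left (hc k) (inv_nonneg.mpr (norm_nonneg _))

theorem not_isBounded_mixedRegion_iff [FiniteDimensional ℝ E] {f : ι → StrongDual ℝ E}
    {I : Set ι} {c : ι → ℝ} (hne : (mixedRegion f I c).Nonempty) :
    ¬ IsBounded (mixedRegion f I c) ↔ ∃ w, w ≠ 0 ∧ w ∈ mixedRecessionCone f I := by
  constructor
  · intro hS
    obtain ⟨x, a, ha0, hx, hnorm, ha⟩ := exists_tendsto_inv_norm_smul_of_not_isBounded hS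
    refine ⟨a, ha0, fun i hi ↦ ?_, fun i hi ↦ ?_⟩
    · exact nonneg_of_forall_le_of_tendsto_inv_norm_smul (fun k ↦ (hx k i).mp hi) hnorm ha
    · have hneg : ∀ k, -c i ≤ (-f i) (x k) := fun k ↦ by
        simpa using (not_le.mp (mt (hx k i).mpr hi)).le
      simpa using nonneg_of_forall_le_of_tendsto_inv_norm_smul hneg hnorm ha
  · rintro ⟨w, hw0, hw⟩
    obtain ⟨u, hu⟩ := hne
    exact not_isBounded_of_forall_add_smul_mem hw0 fun t ht ↦ add_smul_mem_mixedRegion hu hw ht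

end MixedRegion

theorem boundedness_of_mixed_region_independent_of_constants_general
    (n r : ℕ) (v : Fin r → Fin n → ℝ)
    (I : Finset (Fin r))
    (P : (Fin r → ℝ) → Set (Fin n → ℝ))
    (hP : ∀ d, P d = {u : Fin n → ℝ | ∀ i, i ∈ I ↔ -(d i) ≤ ∑ j, u j * v i j}) :
    (∀ d d', (P d).Nonempty → (P d').Nonempty →
        (Bornology.IsBounded (P d) ↔ Bornology.IsBounded (P d'))) ∧
    ((∃ d, (P d).Nonempty ∧ ¬ Bornology.IsBounded (P d)) ↔
      ∃ w : Fin n → ℝ, w ≠ 0 ∧ (∀ i ∈ I, 0 ≤ ∑ j, w j * v i j) ∧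
        (∀ i ∉ I, ∑ j, w j * v i j ≤ 0)) := by
  let f : Fin r → StrongDual ℝ (Fin n → ℝ) := fun i ↦
    LinearMap.toContinuousLinearMap ((dotProductBilin ℝ ℝ (A := ℝ)).flip (v i))
  have hunb : ∀ d, (P d).Nonempty →
      (¬ IsBounded (P d) ↔ ∃ w, w ≠ 0 ∧ w ∈ mixedRecessionCone f I) := fun d ↦ by
    rw [hP d]
    exact not_isBounded_mixedRegion_iff (f := f) (I := I) (c := -d)
  let d₀ : Fin r → ℝ := fun i ↦ if i ∈ I then 0 else -1
  have hd₀ : (P d₀).Nonempty := ⟨0, by rw [hP]; intro i; by_cases hi : i ∈ I <;> simp [d₀, hi]⟩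
  refine ⟨fun d d' hd hd' ↦ not_iff_not.mp ((hunb d hd).trans (hunb d' hd').symm),
    fun ⟨d, hd, hS⟩ ↦ (hunb d hd).mp hS, fun hw ↦ ⟨d₀, hd₀, (hunb d₀ hd₀).mpr hw⟩⟩

/-- For nonzero vectors `v 1, …, v r` spanning `ℝ^n`, a subset `I`, and the
mixed open/closed regions `P d = {u | ⟨u, v i⟩ ≥ -d i ↔ i ∈ I}`, boundedness of `P d` is
independent of `d` whenever nonempty; moreover `P d` is unbounded for some `d` making it
nonempty iff there is a nonzero `w` with `⟨w, v i⟩ ≥ 0` for `i ∈ I` and `⟨w, v i⟩ ≤ 0`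
for `i ∉ I`. -/
theorem boundedness_of_mixed_region_independent_of_constants
    (n r : ℕ) (v : Fin r → Fin n → ℝ)
    (hv : ∀ i, v i ≠ 0)
    (hspan : Submodule.span ℝ (Set.range v) = ⊤)
    (I : Finset (Fin r))
    (P : (Fin r → ℝ) → Set (Fin n → ℝ))
    (hP : ∀ d, P d = {u : Fin n → ℝ | ∀ i, i ∈ I ↔ -(d i) ≤ ∑ j, u j * v i j}) :
    (∀ d d', (P d).Nonempty → (P d').Nonempty →
        (Bornology.IsBounded (P d) ↔ Bornology.IsBounded (P d'))) ∧
    ((∃ d, (P d).Nonempty ∧ ¬ Bornology.IsBounded (P d)) ↔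
      ∃ w : Fin n → ℝ, w ≠ 0 ∧ (∀ i ∈ I, 0 ≤ ∑ j, w j * v i j) ∧
        (∀ i ∉ I, ∑ j, w j * v i j ≤ 0)) :=
  boundedness_of_mixed_region_independent_of_constants_general n r v I P hP
end

section
/- If D is a T-Weil divisor on a complete n-dimensional toric variety and the polytope P_D = P_{D,Δ(1)} is n-dimensional with normal fan equal to Δ, then ĥ^0(D) = vol P_D, and if moreover D is Cartier and ample then (D^n) = vol P_D = n! · (Euclidean volume of P_D). -/
/-!
The lattice points of `m • P` are, after rescaling by `1/m`, the points of `P` on the lattice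
`(1/m) ℤⁿ`, so `h⁰(mD) / mⁿ` is a Riemann sum of the indicator of `P`. It converges to the
volume of `P` because `P`, being a convex polyhedron, is closed with Lebesgue-null frontier.
Vanishing of the higher cohomology makes `χ(O(mD)) = h⁰(mD)`, so both limits agree.
-/

open Finset Filter Topology MeasureTheory Pointwise

open Bornology Submodule

section IntegerPoints

variable {ι : Type*} [Fintype ι]

theorem mem_span_int_basisFun_iff {x : ι → ℝ} :
    x ∈ span ℤ (Set.range (Pi.basisFun ℝ ι)) ↔ ∃ u : ι → ℤ, (fun i => (u i : ℝ)) = x := by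
  rw [Module.Basis.mem_span_iff_repr_mem]
  simp only [Pi.basisFun_repr, Set.mem_range, eq_intCast]
  exact ⟨fun h => ⟨fun i => (h i).choose, funext fun i => (h i).choose_spec⟩,
    fun ⟨u, hu⟩ i => ⟨u i, congrFun hu i⟩⟩

theorem natCard_setOf_intCast_mem (S : Set (ι → ℝ)) :
    Nat.card {u : ι → ℤ | (fun i => (u i : ℝ)) ∈ S} =
      Nat.card ↥(S ∩ span ℤ (Set.range (Pi.basisFun ℝ ι))) := by
  refine Nat.card_congr (Equiv.ofBijective
    (fun u => ⟨fun i => (u.1 i : ℝ), u.2, mem_span_int_basisFun_iff.2 ⟨u.1, rfl⟩⟩) ⟨?_, ?_⟩)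
  · intro u w h
    ext i
    simpa using congrFun (congrArg Subtype.val h) i
  · rintro ⟨x, hxS, hxL⟩
    obtain ⟨u, rfl⟩ := mem_span_int_basisFun_iff.1 hxL
    exact ⟨⟨u, hxS⟩, rfl⟩

theorem natCard_setOf_intCast_mem_smul {c : ℝ} (hc : c ≠ 0) (P : Set (ι → ℝ)) :
    Nat.card {u : ι → ℤ | (fun i => (u i : ℝ)) ∈ c • P} =
      Nat.card ↥(P ∩ c⁻¹ • span ℤ (Set.range (Pi.basisFun ℝ ι))) := by
  rw [natCard_setOf_intCast_mem]
  refine (Nat.card_congr (Equiv.subtypeEquiv (Equiv.smulRight hc) fun x => ?_)).symm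
  simp_rw [Set.mem_inter_iff, Equiv.smulRight_apply, Set.smul_mem_smul_set_iff₀ hc,
    ← Set.mem_inv_smul_set_iff₀ hc]

theorem tendsto_card_intCast_mem_smul_div_pow {P : Set (ι → ℝ)} (hb : IsBounded P)
    (hm : MeasurableSet P) (hf : volume (frontier P) = 0) :
    Tendsto (fun m : ℕ =>
        (Nat.card {u : ι → ℤ | (fun i => (u i : ℝ)) ∈ (m : ℝ) • P} : ℝ) / m ^ Fintype.card ι)
      atTop (𝓝 (volume.real P)) := by
  refine (tendsto_card_div_pow_atTop_volume P hb hm hf).congr' ?_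
  filter_upwards [eventually_ne_atTop 0] with m hm
  rw [natCard_setOf_intCast_mem_smul (Nat.cast_ne_zero.2 hm)]

end IntegerPoints

section Polyhedron

variable {ι κ : Type*} [Fintype ι] (a : κ → ι → ℝ) (b : κ → ℝ)

theorem isClosed_setOf_forall_le_sum_mul :
    IsClosed {u : ι → ℝ | ∀ k, b k ≤ ∑ j, u j * a k j} := by
  simp only [Set.ofPred_forall]
  exact isClosed_iInter fun k => isClosed_le continuous_const (by fun_prop)

theorem convex_setOf_forall_le_sum_mul :
    Convex ℝ {u : ι → ℝ | ∀ k, b k ≤ ∑ j, u j * a k j} := by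
  simp only [Set.ofPred_forall]
  refine convex_iInter fun k => convex_halfSpace_ge ⟨fun x y => ?_, fun c x => ?_⟩ (b k)
  · simp only [Pi.add_apply, add_mul, Finset.sum_add_distrib]
  · simp only [Pi.smul_apply, smul_eq_mul, Finset.mul_sum, mul_assoc]

end Polyhedron

theorem volume_of_ample_divisor_general
    (n r : ℕ) (v : Fin r → Fin n → ℤ) (d : Fin r → ℤ)
    (P : Set (Fin n → ℝ))
    (hPdef : P = {u : Fin n → ℝ | ∀ i, -(d i : ℝ) ≤ ∑ j, u j * (v i j : ℝ)})
    (hbdd : Bornology.IsBounded P)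
    (h0 : ℕ → ℕ)
    (hh0 : ∀ m : ℕ, h0 m =
      Nat.card {u : Fin n → ℤ | (fun j => (u j : ℝ)) ∈ (m : ℝ) • P})
    (hhat0 : ℝ)
    (hlim : Tendsto (fun m : ℕ => (h0 m : ℝ) / ((m : ℝ) ^ n / (n.factorial : ℝ)))
      atTop (𝓝 hhat0))
    (hi : ℕ → ℕ → ℕ)                 -- `hi m i = h^i(mD)`
    (hvanish : ∀ m i, 0 < i → hi m i = 0)
    (chi : ℕ → ℤ)
    (hchi : ∀ m, chi m = (h0 m : ℤ) +
      ∑ i ∈ Icc 1 n, (-1 : ℤ) ^ i * (hi m i : ℤ))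
    (Dn : ℝ)
    (hRR : Tendsto (fun m : ℕ => (chi m : ℝ) / ((m : ℝ) ^ n / (n.factorial : ℝ)))
      atTop (𝓝 Dn)) :
    hhat0 = (n.factorial : ℝ) * (volume P).toReal ∧
    Dn = (n.factorial : ℝ) * (volume P).toReal := by
  have hclosed : IsClosed P := hPdef ▸ isClosed_setOf_forall_le_sum_mul _ _
  have hconvex : Convex ℝ P := hPdef ▸ convex_setOf_forall_le_sum_mul _ _
  have hcount := (tendsto_card_intCast_mem_smul_div_pow hbdd hclosed.measurableSet
    (hconvex.addHaar_frontier volume)).const_mul (n.factorial : ℝ)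
  have hh0_lim : Tendsto (fun m : ℕ => (h0 m : ℝ) / ((m : ℝ) ^ n / (n.factorial : ℝ)))
      atTop (𝓝 ((n.factorial : ℝ) * (volume P).toReal)) := by
    refine hcount.congr fun m => ?_
    rw [hh0, Fintype.card_fin, div_div_eq_mul_div]
    ring
  have hchi_eq : ∀ m, (chi m : ℝ) = h0 m := fun m => by
    rw [hchi, Finset.sum_eq_zero fun i hi' => by rw [hvanish m i (mem_Icc.1 hi').1]; ring]
    simp
  simp_rw [hchi_eq] at hRR
  exact ⟨tendsto_nhds_unique hlim hh0_lim, tendsto_nhds_unique hRR hh0_lim⟩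

/-- Let `D` be a `T`-Weil divisor on a complete `n`-dimensional toric
variety with polytope `P_D = {u : ⟨u, v_ρ⟩ ≥ -d_ρ ∀ρ}` which is `n`-dimensional
(nonempty interior) with normal fan equal to `Δ`.  Since `h^0(mD) = #(mP_D ∩ M)`
(`hh0`), one has `ĥ^0(D) = vol P_D`; and if moreover `D` is Cartier and ample — so that
`h^i(mD) = 0` for `i > 0` by Demazure vanishing (`hvanish`), whence
`χ(O(mD)) = h^0(mD)` — the asymptotic Riemann–Roch limit (`hRR`) gives
`(D^n) = vol P_D = n! · (Euclidean volume of P_D)`. -/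
theorem volume_of_ample_divisor
    (n r : ℕ) (v : Fin r → Fin n → ℤ) (d : Fin r → ℤ)
    (P : Set (Fin n → ℝ))
    (hPdef : P = {u : Fin n → ℝ | ∀ i, -(d i : ℝ) ≤ ∑ j, u j * (v i j : ℝ)})
    (hbdd : Bornology.IsBounded P)
    (hdim : (interior P).Nonempty)
    (h0 : ℕ → ℕ)
    (hh0 : ∀ m : ℕ, h0 m =
      Nat.card {u : Fin n → ℤ | (fun j => (u j : ℝ)) ∈ (m : ℝ) • P})
    (hhat0 : ℝ)
    (hlim : Tendsto (fun m : ℕ => (h0 m : ℝ) / ((m : ℝ) ^ n / (n.factorial : ℝ)))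
      atTop (𝓝 hhat0))
    (hi : ℕ → ℕ → ℕ)                 -- `hi m i = h^i(mD)`
    (hvanish : ∀ m i, 0 < i → hi m i = 0)
    (chi : ℕ → ℤ)
    (hchi : ∀ m, chi m = (h0 m : ℤ) +
      ∑ i ∈ Icc 1 n, (-1 : ℤ) ^ i * (hi m i : ℤ))
    (Dn : ℝ)
    (hRR : Tendsto (fun m : ℕ => (chi m : ℝ) / ((m : ℝ) ^ n / (n.factorial : ℝ)))
      atTop (𝓝 Dn)) :
    hhat0 = (n.factorial : ℝ) * (volume P).toReal ∧
    Dn = (n.factorial : ℝ) * (volume P).toReal :=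
  volume_of_ample_divisor_general n r v d P hPdef hbdd h0 hh0 hhat0 hlim hi hvanish chi hchi Dn hRR
end

section
/- Derivatives of the volume function: Let Σ be a complete simplicial projective fan refinement datum with GKZ chamber γ_Σ, and f the induced birational transform of divisors. For D with [D] ∈ γ_Σ and prime T-invariant divisors D_1, ..., D_r corresponding to rays ρ_1, ..., ρ_r, the r-th directional derivative ∂^r ĥ^0 / (∂D_1 ⋯ ∂D_r)(D) equals (n!/(n-r)!) · (f_*(D)^{n-r} · f_*(D_1) ⋯ f_*(D_r)). In particular this derivative is strictly positive on γ_Σ if ρ_1, ..., ρ_r span a cone of Σ, and vanishes identically on γ_Σ otherwise. -/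
/-!
Near a point of the open chamber `γ`, `ĥ⁰` coincides with the diagonal `D ↦ B(D, …, D)` of the
symmetric form `B`, which is continuous because divisor space is finite-dimensional. The `r`-th
derivative of the diagonal in directions `D_1, …, D_r` is a sum over the `n!/(n-r)!` injective
placements of the directions among the `n` slots, and symmetry makes every term equal to
`B(D, …, D, D_1, …, D_r)`. Positivity and vanishing are then those of this intersection number.
-/

open Finset

/-- The argument vector `(D, …, D, D_{ρ_1}, …, D_{ρ_r})` (with `n - r` copies of `D`)
fed to the top intersection form of `X(Σ)`; the divisor `D_ρ` is recorded by the
coordinate vector `Pi.single ρ 1` in divisor space `ℝ^{Δ(1)}`. -/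
noncomputable def mixedArg (n r rr : ℕ) (hrr : rr ≤ n) (d : Fin r → ℝ)
    (ρs : Fin rr → Fin r) : Fin n → (Fin r → ℝ) :=
  fun i => if hi : (i : ℕ) < n - rr then d
    else Pi.single (ρs ⟨(i : ℕ) - (n - rr), by have := i.isLt; omega⟩) (1 : ℝ)

theorem MultilinearMap.continuous_of_finiteDimensional {𝕜 ι F : Type*} {E : ι → Type*}
    [NontriviallyNormedField 𝕜] [CompleteSpace 𝕜] [Fintype ι]
    [∀ i, NormedAddCommGroup (E i)] [∀ i, NormedSpace 𝕜 (E i)] [∀ i, FiniteDimensional 𝕜 (E i)]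
    [NormedAddCommGroup F] [NormedSpace 𝕜 F] (f : MultilinearMap 𝕜 E F) : Continuous f := by
  classical
  let b := fun i => Module.finBasis 𝕜 (E i)
  have expand : ⇑f = fun m => ∑ k : ∀ i, Fin (Module.finrank 𝕜 (E i)),
      (∏ i, (b i).repr (m i) (k i)) • f (fun i => b i (k i)) := by
    funext m
    conv_lhs => rw [← funext fun i => (b i).sum_repr (m i)]
    simp only [f.map_sum, f.map_smul_univ]
  rw [expand]
  refine continuous_finsetSum _ fun k _ => (continuous_finsetProd _ fun i _ => ?_).smul
    continuous_const
  exact ((b i).coord (k i)).continuous_of_finiteDimensional.comp (continuous_apply i)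

theorem apply_eq_of_perm_invariant_of_agree_off_range {ι κ α β : Type*} [Finite κ]
    {g : (ι → α) → β} (hg : ∀ (σ : Equiv.Perm ι) (m : ι → α), g (m ∘ σ) = g m) {x : α}
    {v : κ → α} {u w : ι → α} {e e' : κ → ι} (he : Function.Injective e)
    (he' : Function.Injective e') (hu : ∀ a, u (e a) = v a) (hw : ∀ a, w (e' a) = v a)
    (hux : ∀ j ∉ Set.range e, u j = x) (hwx : ∀ j ∉ Set.range e', w j = x) : g u = g w := by
  obtain ⟨σ, hσ⟩ := Equiv.Perm.exists_extending_pair e e' he he'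
  rw [← hg σ w]
  congr 1
  funext j
  by_cases hj : j ∈ Set.range e
  · obtain ⟨a, rfl⟩ := hj
    simp only [Function.comp_apply, hσ, hu, hw]
  · have hσj : σ j ∉ Set.range e' := by
      rintro ⟨a, ha⟩
      exact hj ⟨a, σ.injective (by rw [hσ, ha])⟩
    rw [Function.comp_apply, hux j hj, hwx _ hσj]

/-- Mathlib's formula for the iterated derivative of `f` is a sum over the embeddings
`Fin k ↪ ι`; by symmetry each of these `(card ι).descFactorial k` terms equals `f m`. -/
theorem ContinuousMultilinearMap.iteratedFDeriv_diagonal_of_symmetric {𝕜 ι E F : Type*}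
    [NontriviallyNormedField 𝕜] [Fintype ι] [NormedAddCommGroup E] [NormedSpace 𝕜 E]
    [NormedAddCommGroup F] [NormedSpace 𝕜 F]
    (f : ContinuousMultilinearMap 𝕜 (fun _ : ι => E) F)
    (hf : ∀ (σ : Equiv.Perm ι) (m : ι → E), f (m ∘ σ) = f m) {k : ℕ} (x : E) (v : Fin k → E)
    {m : ι → E} {e : Fin k → ι} (he : Function.Injective e) (hm : ∀ a, m (e a) = v a)
    (hmx : ∀ j ∉ Set.range e, m j = x) :
    iteratedFDeriv 𝕜 k (fun y => f (fun _ => y)) x v = (Fintype.card ι).descFactorial k • f m := by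
  classical
  let diag : E →L[𝕜] (ι → E) := ContinuousLinearMap.pi fun _ => ContinuousLinearMap.id 𝕜 E
  change iteratedFDeriv 𝕜 k (f ∘ diag) x v = _
  rw [diag.iteratedFDeriv_comp_right f.contDiff x le_top,
    ContinuousMultilinearMap.compContinuousLinearMap_apply, f.iteratedFDeriv_eq,
    ContinuousMultilinearMap.iteratedFDeriv, _root_.sum_apply]
  have term : ∀ e' : Fin k ↪ ι, f.iteratedFDerivComponent e'.toEquivRange
      (Pi.compRightL 𝕜 _ Subtype.val (diag x)) (fun i => diag (v i)) = f m := by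
    intro e'
    rw [ContinuousMultilinearMap.iteratedFDerivComponent_apply]
    exact apply_eq_of_perm_invariant_of_agree_off_range hf e'.injective he
      (fun a => by simp [diag]) hm (fun j hj => by simp [diag, hj]) hmx
  simp only [term, Finset.sum_const, Finset.card_univ, Fintype.card_embedding_eq, Fintype.card_fin]

section mixedArg

variable {n r rr : ℕ} (hrr : rr ≤ n) (d : Fin r → ℝ) (ρs : Fin rr → Fin r)

def mixedSlot (a : Fin rr) : Fin n := ⟨n - rr + a, by omega⟩

theorem mixedSlot_injective : Function.Injective (mixedSlot hrr) := fun a b h => by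
  simpa [mixedSlot, Fin.ext_iff] using h

theorem mixedArg_mixedSlot (a : Fin rr) :
    mixedArg n r rr hrr d ρs (mixedSlot hrr a) = Pi.single (ρs a) 1 := by
  simp [mixedArg, mixedSlot]

theorem mixedArg_of_notMem_range_mixedSlot {j : Fin n} (hj : j ∉ Set.range (mixedSlot hrr)) :
    mixedArg n r rr hrr d ρs j = d := by
  refine dif_pos (not_le.mp fun hle => hj ⟨⟨j - (n - rr), by omega⟩, ?_⟩)
  ext
  simp only [mixedSlot]
  omega

end mixedArg

theorem Nat.cast_descFactorial_eq_div {K : Type*} [DivisionSemiring K] [CharZero K] {n k : ℕ}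
    (h : k ≤ n) : (n.descFactorial k : K) = n.factorial / (n - k).factorial := by
  rw [Nat.descFactorial_eq_div h,
    Nat.cast_div (Nat.factorial_dvd_factorial (Nat.sub_le n k))
      (Nat.cast_ne_zero.mpr (Nat.factorial_ne_zero _))]

/-- Lemma on partial derivatives of the volume function: Let `γ_Σ` be a
GKZ chamber, an open set in divisor space `ℝ^{Δ(1)}`, on which `ĥ^0` is given by the
top self-intersection of the birational transform: `ĥ^0(D) = (f_*(D)^n) = B(D, …, D)`
(`hvol`), where `B` is the symmetric multilinear intersection form
`(E_1, …, E_n) ↦ (f_*(E_1) ⋯ f_*(E_n))` of `X(Σ)`.  Then for prime `T`-invariant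
divisors `D_1, …, D_r` corresponding to distinct rays `ρ_1, …, ρ_r`,
`∂^r ĥ^0/(∂D_1 ⋯ ∂D_r)(D) = (n!/(n-r)!) · (f_*(D)^{n-r} · f_*(D_1) ⋯ f_*(D_r))`;
in particular this derivative is strictly positive on `γ_Σ` if `ρ_1, …, ρ_r` span a
cone of `Σ` (recorded by its ray sets `Scones`) and vanishes identically on `γ_Σ`
otherwise (these intersection-number facts being `hpos` and `hzero`). -/
theorem gkz_chamber_partial_derivatives_of_volume
    (n r rr : ℕ) (hrr : rr ≤ n)
    (Scones : Finset (Finset (Fin r)))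
    (γ : Set (Fin r → ℝ)) (hopen : IsOpen γ)
    (B : MultilinearMap ℝ (fun _ : Fin n => (Fin r → ℝ)) ℝ)
    (hsymm : ∀ (e : Equiv.Perm (Fin n)) (x : Fin n → (Fin r → ℝ)), B (x ∘ e) = B x)
    (h0 : (Fin r → ℝ) → ℝ)
    (hvol : ∀ d ∈ γ, h0 d = B (fun _ => d))
    (hpos : ∀ d ∈ γ, ∀ ρs : Fin rr → Fin r, Function.Injective ρs →
      Finset.image ρs Finset.univ ∈ Scones → 0 < B (mixedArg n r rr hrr d ρs))
    (hzero : ∀ d ∈ γ, ∀ ρs : Fin rr → Fin r, Function.Injective ρs →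
      Finset.image ρs Finset.univ ∉ Scones → B (mixedArg n r rr hrr d ρs) = 0) :
    ∀ d ∈ γ, ∀ ρs : Fin rr → Fin r, Function.Injective ρs →
      (iteratedFDeriv ℝ rr h0 d (fun i => Pi.single (ρs i) (1 : ℝ))
          = ((n.factorial : ℝ) / ((n - rr).factorial : ℝ)) *
              B (mixedArg n r rr hrr d ρs)) ∧
      (Finset.image ρs Finset.univ ∈ Scones →
        0 < iteratedFDeriv ℝ rr h0 d (fun i => Pi.single (ρs i) (1 : ℝ))) ∧
      (Finset.image ρs Finset.univ ∉ Scones →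
        iteratedFDeriv ℝ rr h0 d (fun i => Pi.single (ρs i) (1 : ℝ)) = 0) := by
  intro d hd ρs hinj
  let Bc : ContinuousMultilinearMap ℝ (fun _ : Fin n => (Fin r → ℝ)) ℝ :=
    ⟨B, B.continuous_of_finiteDimensional⟩
  have hlocal : h0 =ᶠ[nhds d] fun y => Bc (fun _ => y) :=
    Filter.eventually_of_mem (hopen.mem_nhds hd) hvol
  have key : iteratedFDeriv ℝ rr h0 d (fun i => Pi.single (ρs i) (1 : ℝ))
      = ((n.factorial : ℝ) / ((n - rr).factorial : ℝ)) * B (mixedArg n r rr hrr d ρs) := by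
    rw [(hlocal.iteratedFDeriv ℝ rr).eq_of_nhds,
      Bc.iteratedFDeriv_diagonal_of_symmetric hsymm d _ (mixedSlot_injective hrr)
        (mixedArg_mixedSlot hrr d ρs) (fun j => mixedArg_of_notMem_range_mixedSlot hrr d ρs),
      Fintype.card_fin, nsmul_eq_mul, Nat.cast_descFactorial_eq_div hrr]
    rfl
  have hcoeff : 0 < (n.factorial : ℝ) / ((n - rr).factorial : ℝ) := by positivity
  refine ⟨key, fun hin => ?_, fun hout => ?_⟩
  · rw [key]
    exact mul_pos hcoeff (hpos d hd ρs hinj hin)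
  · rw [key, hzero d hd ρs hinj hout, mul_zero]
end

section
/- Characterization of membership in a GKZ cone: Let Δ be a fan with convex n-dimensional support, Σ a possibly degenerate fan with |Σ| = |Δ| and X_Σ quasiprojective, and I ⊆ Δ(1) with every cone of Σ positively spanned by rays in Δ(1) \ I. For a T-ℚ-Weil divisor D = Σ d_ρ D_ρ, the following are equivalent: (i) [D] ∈ γ_{Σ,I}; (ii) there is a convex function Ξ on |Δ|, linear on each maximal cone of Σ, with Ξ(v_ρ) ≥ -d_ρ for all ρ ∈ Δ(1), with equality for ρ ∉ I; (iii) D is linearly equivalent to φ_Σ(D') + E with D' a nef T-ℚ-Cartier divisor on X_Σ, P_{D̃} = P_{D'}, and E effective with support in ∪_{ρ∈I} D_ρ. -/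
open Finset

/-- The polyhedron `P_D = {u : ⟨u, v_ρ⟩ ≥ -d_ρ for all ρ}`. -/
def PolyOf {n r : ℕ} (v : Fin r → Fin n → ℤ) (d : Fin r → ℝ) : Set (Fin n → ℝ) :=
  {u | ∀ i, -(d i) ≤ ∑ j, u j * (v i j : ℝ)}

/-- The support function `Ξ_D(w) = min{⟨u, w⟩ : u ∈ P_D}`. -/
noncomputable def XiD {n r : ℕ} (v : Fin r → Fin n → ℤ) (d : Fin r → ℝ)
    (w : Fin n → ℝ) : ℝ :=
  sInf ((fun u => ∑ j, u j * w j) '' PolyOf v d)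

/-- Upper convexity (the toric convention for convexity of support functions):
`Ξ(a•x + b•y) ≥ a·Ξ(x) + b·Ξ(y)` on `s`. -/
def UpperConvexOn {n : ℕ} (s : Set (Fin n → ℝ)) (Ξ : (Fin n → ℝ) → ℝ) : Prop :=
  ∀ x ∈ s, ∀ y ∈ s, ∀ a b : ℝ, 0 ≤ a → 0 ≤ b → a + b = 1 →
    a * Ξ x + b * Ξ y ≤ Ξ (a • x + b • y)

/-- `Ξ` is linear on each (maximal) cone of the fan `Σ`, the fan being recorded by the
finite set `MC` of its maximal cones. -/
def PiecewiseLinearOn {n : ℕ} (MC : Finset (Set (Fin n → ℝ)))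
    (Ξ : (Fin n → ℝ) → ℝ) : Prop :=
  ∀ σ ∈ MC, ∃ u : Fin n → ℝ, ∀ w ∈ σ, Ξ w = ∑ j, u j * w j

/-- The cone positively spanned by the rays in `c`. -/
def coneOf {n r : ℕ} (v : Fin r → Fin n → ℤ) (c : Finset (Fin r)) : Set (Fin n → ℝ) :=
  {x | ∃ cf : Fin r → ℝ, (∀ i, 0 ≤ cf i) ∧ (∀ i ∉ c, cf i = 0) ∧
    x = ∑ i, cf i • (fun j => (v i j : ℝ))}

namespace GKZaux
variable {n r : ℕ}

lemma vmem_coneOf (v : Fin r → Fin n → ℤ) {T : Finset (Fin r)} {i : Fin r} (hi : i ∈ T) :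
    (fun j => (v i j : ℝ)) ∈ coneOf v T := by
  classical
  refine ⟨fun k => if k = i then 1 else 0, ?_, ?_, ?_⟩
  · intro k; by_cases h : k = i <;> simp [h]
  · intro k hk
    simp only [ite_eq_right_iff, one_ne_zero]
    intro h; exact absurd (h ▸ hi) hk
  · simp [ite_smul]

lemma caratheodory (v : Fin r → Fin n → ℤ) :
    ∀ (S : Finset (Fin r)) (cf : Fin r → ℝ), (∀ i, 0 ≤ cf i) → (∀ i ∉ S, cf i = 0) →
    ∃ S' : Finset (Fin r), S' ⊆ S ∧
      LinearIndependent ℝ (fun i : S' => (fun j => (v i j : ℝ))) ∧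
      (∑ i, cf i • (fun j => (v i j : ℝ))) ∈ coneOf v S' := by
  intro S
  induction S using Finset.strongInduction with
  | _ S ih =>
    intro cf hcf0 hcfS
    classical
    set S₀ : Finset (Fin r) := S.filter (fun i => cf i ≠ 0) with hS₀
    have cfz₀ : ∀ i ∉ S₀, cf i = 0 := by
      intro i hi
      by_cases hiS : i ∈ S
      · by_contra hc; exact hi (Finset.mem_filter.mpr ⟨hiS, hc⟩)
      · exact hcfS i hiS
    by_cases hind : LinearIndependent ℝ (fun i : S₀ => (fun j => (v i j : ℝ)))
    · exact ⟨S₀, Finset.filter_subset _ _, hind, cf, hcf0, cfz₀, rfl⟩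
    · rw [Fintype.not_linearIndependent_iff] at hind
      have hgs : ∃ g : S₀ → ℝ, (∑ i, g i • (fun j => (v (i : Fin r) j : ℝ))) = 0 ∧ ∃ i, 0 < g i := by
        obtain ⟨g, hsum, i₁, hi₁⟩ := hind
        rcases lt_or_gt_of_ne hi₁ with h | h
        · refine ⟨-g, ?_, i₁, by simpa using h⟩
          have h2 : (∑ i, (-g) i • (fun j => (v (i : Fin r) j : ℝ))) =
              -(∑ i, g i • (fun j => (v (i : Fin r) j : ℝ))) := by
            simp [neg_smul]
          rw [h2, hsum, neg_zero]
        · exact ⟨g, hsum, i₁, h⟩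
      obtain ⟨g, hgsum, i₁, hgi₁⟩ := hgs
      set a : Fin r → ℝ := fun i => if h : i ∈ S₀ then g ⟨i, h⟩ else 0 with ha
      have haz : ∀ i ∉ S₀, a i = 0 := fun i hi => dif_neg hi
      have hasum : (∑ i, a i • (fun j => (v i j : ℝ))) = (0 : Fin n → ℝ) := by
        have h1 : (∑ i ∈ S₀, a i • (fun j => (v i j : ℝ))) =
            (∑ i : Fin r, a i • (fun j => (v i j : ℝ))) :=
          Finset.sum_subset (Finset.subset_univ S₀)
            (fun x _ hx => by rw [haz x hx, zero_smul])
        have h2 : (∑ i ∈ S₀, a i • (fun j => (v i j : ℝ))) =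
            (∑ i : S₀, g i • (fun j => (v (i : Fin r) j : ℝ))) := by
          rw [← Finset.sum_attach S₀ (fun i => a i • (fun j => (v i j : ℝ)))]
          refine Finset.sum_congr rfl fun i _ => ?_
          simp only [ha, dif_pos i.2]
        rw [← h1, h2, hgsum]
      have hapos : ∃ i, 0 < a i ∧ i ∈ S₀ := by
        refine ⟨i₁, ?_, i₁.2⟩
        have : a ↑i₁ = g i₁ := by simp only [ha, dif_pos i₁.2]
        rw [this]; exact hgi₁
      set Pos : Finset (Fin r) := S₀.filter (fun i => 0 < a i) with hPos
      have hPosne : Pos.Nonempty := by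
        obtain ⟨i, h1, h2⟩ := hapos
        exact ⟨i, Finset.mem_filter.mpr ⟨h2, h1⟩⟩
      obtain ⟨i₀, hi₀mem, hi₀⟩ := Finset.exists_mem_eq_inf' hPosne (fun i => cf i / a i)
      set t : ℝ := Pos.inf' hPosne (fun i => cf i / a i) with htdef
      have hai₀ : 0 < a i₀ := (Finset.mem_filter.mp hi₀mem).2
      have hteq : t = cf i₀ / a i₀ := hi₀
      have ht0 : 0 ≤ t := by
        rw [hteq]; exact div_nonneg (hcf0 i₀) hai₀.le
      set cf' : Fin r → ℝ := fun i => cf i - t * a i with hcf'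
      have hcf'0 : ∀ i, 0 ≤ cf' i := by
        intro i
        by_cases hpos : 0 < a i
        · have hiS₀ : i ∈ S₀ := by
            by_contra hc; rw [haz i hc] at hpos; exact lt_irrefl 0 hpos
          have hiPos : i ∈ Pos := Finset.mem_filter.mpr ⟨hiS₀, hpos⟩
          have h3 : t ≤ cf i / a i := Finset.inf'_le (fun i => cf i / a i) hiPos
          have h4 := (le_div_iff₀ hpos).mp h3
          simp only [hcf']; linarith
        · push_neg at hpos
          have h3 : t * a i ≤ 0 := mul_nonpos_of_nonneg_of_nonpos ht0 hpos
          have h4 := hcf0 i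
          simp only [hcf']; linarith
      have hcf'i₀ : cf' i₀ = 0 := by
        simp only [hcf', hteq]
        rw [div_mul_cancel₀ _ (ne_of_gt hai₀)]
        ring
      have hcf'z : ∀ i ∉ S₀.erase i₀, cf' i = 0 := by
        intro i hi
        by_cases hii : i = i₀
        · subst hii; exact hcf'i₀
        · have hiS₀ : i ∉ S₀ := fun hc => hi (Finset.mem_erase.mpr ⟨hii, hc⟩)
          simp only [hcf', cfz₀ i hiS₀, haz i hiS₀, mul_zero, sub_zero]
      have hsum' : (∑ i, cf' i • (fun j => (v i j : ℝ)))
          = (∑ i, cf i • (fun j => (v i j : ℝ))) := by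
        simp only [hcf', sub_smul]
        rw [Finset.sum_sub_distrib]
        have h5 : (∑ i, (t * a i) • (fun j => (v i j : ℝ)))
            = t • (∑ i, a i • (fun j => (v i j : ℝ))) := by
          rw [Finset.smul_sum]
          exact Finset.sum_congr rfl fun i _ => (smul_smul t (a i) _).symm
        rw [h5, hasum, smul_zero, sub_zero]
      have hss : S₀.erase i₀ ⊂ S := by
        have h1 : S₀.erase i₀ ⊆ S := (Finset.erase_subset _ _).trans (Finset.filter_subset _ _)
        have hi₀S : i₀ ∈ S := Finset.filter_subset _ _ (Finset.mem_filter.mp hi₀mem).1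
        exact (Finset.ssubset_iff_of_subset h1).mpr ⟨i₀, hi₀S, Finset.notMem_erase i₀ S₀⟩
      obtain ⟨S', h1, h2, h3⟩ := ih _ hss cf' hcf'0 hcf'z
      refine ⟨S', h1.trans ((Finset.erase_subset _ _).trans (Finset.filter_subset _ _)), h2, ?_⟩
      rw [← hsum']; exact h3

lemma isClosed_coneOf_indep (v : Fin r → Fin n → ℤ) (S : Finset (Fin r))
    (hind : LinearIndependent ℝ (fun i : S => (fun j => (v i j : ℝ)))) :
    IsClosed (coneOf v S) := by
  classical
  set f : ({x // x ∈ S} → ℝ) →ₗ[ℝ] (Fin n → ℝ) :=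
    { toFun := fun c => ∑ i : {x // x ∈ S}, c i • (fun j => (v (i : Fin r) j : ℝ))
      map_add' := by intro a b; simp [add_smul, Finset.sum_add_distrib]
      map_smul' := by intro m a; simp [smul_smul, Finset.smul_sum] } with hf
  have hker : LinearMap.ker f = ⊥ := by
    rw [LinearMap.ker_eq_bot']
    intro c hc
    have h1 := Fintype.linearIndependent_iff.mp hind c hc
    exact funext h1
  have hclosed := (LinearMap.isClosedEmbedding_of_injective hker).isClosedMap
  have hK : IsClosed {c : {x // x ∈ S} → ℝ | ∀ i, 0 ≤ c i} := by
    have h1 : {c : {x // x ∈ S} → ℝ | ∀ i, 0 ≤ c i} = ⋂ i, {c | 0 ≤ c i} := by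
      ext c; simp [Set.mem_iInter]
    rw [h1]
    exact isClosed_iInter fun i => isClosed_le continuous_const (continuous_apply i)
  have him : coneOf v S = f '' {c | ∀ i, 0 ≤ c i} := by
    ext x
    constructor
    · rintro ⟨cf, h0, hz, rfl⟩
      refine ⟨fun i => cf i, fun i => h0 i, ?_⟩
      show (∑ i : {x // x ∈ S}, cf i • (fun j => (v (i : Fin r) j : ℝ))) = _
      rw [Finset.sum_coe_sort S (fun i => cf i • (fun j => (v i j : ℝ)))]
      exact Finset.sum_subset (Finset.subset_univ S)
        (fun x _ hx => by rw [hz x hx, zero_smul])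
    · rintro ⟨c, hc, rfl⟩
      refine ⟨fun i => if h : i ∈ S then c ⟨i, h⟩ else 0, ?_, ?_, ?_⟩
      · intro i
        dsimp only
        by_cases h : i ∈ S
        · rw [dif_pos h]; exact hc _
        · rw [dif_neg h]
      · intro i hi; dsimp only; rw [dif_neg hi]
      · show _ = ∑ i : Fin r, (if h : i ∈ S then c ⟨i, h⟩ else 0) • (fun j => (v i j : ℝ))
        rw [← Finset.sum_subset (Finset.subset_univ S)
          (fun x _ hx => by rw [dif_neg hx, zero_smul])]
        rw [← Finset.sum_coe_sort S
          (fun i => (if h : i ∈ S then c ⟨i, h⟩ else 0) • (fun j => (v i j : ℝ)))]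
        refine Finset.sum_congr rfl fun i _ => ?_
        rw [dif_pos i.2]
  rw [him]
  exact hclosed _ hK

lemma isClosed_coneOf (v : Fin r → Fin n → ℤ) (T : Finset (Fin r)) :
    IsClosed (coneOf v T) := by
  classical
  have heq : coneOf v T = ⋃ S ∈ (T.powerset.filter
      (fun S : Finset (Fin r) => LinearIndependent ℝ (fun i : S => (fun j => (v i j : ℝ))))), coneOf v S := by
    ext x
    simp only [Set.mem_iUnion, Finset.mem_filter, Finset.mem_powerset, exists_prop]
    constructor
    · rintro ⟨cf, h0, hz, rfl⟩
      obtain ⟨S', h1, h2, h3⟩ := caratheodory v T cf h0 hz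
      exact ⟨S', ⟨h1, h2⟩, h3⟩
    · rintro ⟨S, ⟨hS, -⟩, cf, h0, hz, rfl⟩
      exact ⟨cf, h0, fun i hi => hz i (fun hc => hi (hS hc)), rfl⟩
  rw [heq]
  exact isClosed_biUnion_finset fun S hS =>
    isClosed_coneOf_indep v S (Finset.mem_filter.mp hS).2

lemma interior_union_finset_empty {α β : Type*} [TopologicalSpace α] (f : β → Set α) :
    ∀ (s : Finset β), (∀ b ∈ s, IsClosed (f b)) → (∀ b ∈ s, interior (f b) = ∅) →
    interior (⋃ b ∈ s, f b) = ∅ := by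
  classical
  intro s
  induction s using Finset.induction_on with
  | empty => intro _ _; simp
  | @insert a s ha ih =>
    intro hc hi
    rw [Finset.set_biUnion_insert]
    have ihs := ih (fun b hb => hc b (Finset.mem_insert_of_mem hb))
      (fun b hb => hi b (Finset.mem_insert_of_mem hb))
    have h1 : interior (f a ∪ ⋃ b ∈ s, f b) \ f a ⊆ interior (⋃ b ∈ s, f b) :=
      interior_maximal (fun x hx => (interior_subset hx.1).resolve_left hx.2)
        (isOpen_interior.sdiff (hc a (Finset.mem_insert_self a s)))
    rw [ihs] at h1
    have h2 : interior (f a ∪ ⋃ b ∈ s, f b) ⊆ interior (f a) := by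
      refine interior_maximal (fun x hx => ?_) isOpen_interior
      by_contra hxa
      exact h1 ⟨hx, hxa⟩
    rw [hi a (Finset.mem_insert_self a s)] at h2
    exact Set.subset_empty_iff.mp h2

lemma dot_sum_rep (v : Fin r → Fin n → ℤ) (u w : Fin n → ℝ) (cf : Fin r → ℝ)
    (hrep : w = ∑ i, cf i • (fun j => (v i j : ℝ))) :
    ∑ j, u j * w j = ∑ i, cf i * ∑ j, u j * (v i j : ℝ) := by
  subst hrep
  calc ∑ j, u j * (∑ i, cf i • (fun j' => (v i j' : ℝ))) j
      = ∑ j, ∑ i, cf i * (u j * (v i j : ℝ)) := by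
        refine Finset.sum_congr rfl fun j _ => ?_
        rw [Finset.sum_apply, Finset.mul_sum]
        refine Finset.sum_congr rfl fun i _ => ?_
        simp only [Pi.smul_apply, smul_eq_mul]
        ring
    _ = ∑ i, ∑ j, cf i * (u j * (v i j : ℝ)) := Finset.sum_comm
    _ = ∑ i, cf i * ∑ j, u j * (v i j : ℝ) := by
        exact Finset.sum_congr rfl fun i _ => (Finset.mul_sum _ _ _).symm

lemma dot_combo (u x y : Fin n → ℝ) (a b : ℝ) :
    ∑ j, u j * (a • x + b • y) j = a * (∑ j, u j * x j) + b * (∑ j, u j * y j) := by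
  rw [Finset.mul_sum, Finset.mul_sum, ← Finset.sum_add_distrib]
  refine Finset.sum_congr rfl fun j _ => ?_
  simp only [Pi.add_apply, Pi.smul_apply, smul_eq_mul]
  ring

lemma xi_le_dot (v : Fin r → Fin n → ℤ) (d : Fin r → ℝ)
    (I : Finset (Fin r)) (Ξ : (Fin n → ℝ) → ℝ)
    (heq : ∀ i ∉ I, Ξ (fun j => (v i j : ℝ)) = -(d i))
    (T : Finset (Fin r)) (hT : ∀ i ∈ T, i ∉ I)
    (uσ : Fin n → ℝ) (hlin : ∀ w ∈ coneOf v T, Ξ w = ∑ j, uσ j * w j)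
    (u : Fin n → ℝ) (hu : u ∈ PolyOf v d)
    (w : Fin n → ℝ) (hw : w ∈ coneOf v T) :
    Ξ w ≤ ∑ j, u j * w j := by
  obtain ⟨cf, h0, hz, hrep⟩ := hw
  have hΞw : Ξ w = ∑ i, cf i * ∑ j, uσ j * (v i j : ℝ) := by
    rw [hlin w ⟨cf, h0, hz, hrep⟩, dot_sum_rep v uσ w cf hrep]
  rw [hΞw, dot_sum_rep v u w cf hrep]
  refine Finset.sum_le_sum fun i _ => ?_
  rcases eq_or_ne (cf i) 0 with h | h
  · simp [h]
  · have hiT : i ∈ T := by by_contra hc; exact h (hz i hc)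
    have h1 : ∑ j, uσ j * (v i j : ℝ) = -(d i) := by
      have h2 := hlin _ (vmem_coneOf v hiT)
      rw [heq i (hT i hiT)] at h2
      simpa using h2.symm
    rw [h1]
    exact mul_le_mul_of_nonneg_left (hu i) (h0 i)

lemma shrink {n : ℕ} (w p : Fin n → ℝ) {U : Set (Fin n → ℝ)} (hU : IsOpen U) (hw : w ∈ U) :
    ∃ t : ℝ, 0 < t ∧ t < 1 ∧ t • p + (1 - t) • w ∈ U := by
  obtain ⟨ε, hε, hball⟩ := Metric.isOpen_iff.mp hU w hw
  have hden : (0:ℝ) < ‖p - w‖ + 1 := by positivity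
  set t := min (1/2 : ℝ) (ε / (2 * (‖p - w‖ + 1))) with ht
  have ht0 : 0 < t := lt_min (by norm_num) (by positivity)
  refine ⟨t, ht0, lt_of_le_of_lt (min_le_left _ _) (by norm_num), ?_⟩
  apply hball
  rw [Metric.mem_ball, dist_eq_norm]
  have hz : t • p + (1 - t) • w - w = t • (p - w) := by
    rw [smul_sub, sub_smul, one_smul]; abel
  rw [hz, norm_smul, Real.norm_eq_abs, abs_of_pos ht0]
  have h2 : t ≤ ε / (2 * (‖p - w‖ + 1)) := min_le_right _ _
  have h3 : t * ‖p - w‖ ≤ (ε / (2 * (‖p - w‖ + 1))) * ‖p - w‖ :=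
    mul_le_mul_of_nonneg_right h2 (norm_nonneg _)
  have h4 : (ε / (2 * (‖p - w‖ + 1))) * ‖p - w‖ < ε := by
    rw [div_mul_eq_mul_div, div_lt_iff₀ (by positivity)]
    nlinarith [norm_nonneg (p - w)]
  linarith

end GKZaux

open GKZaux

/-- GKZ Lemma: Let `Δ` be a fan with convex `n`-dimensional support
`supp` and rays `v`, `Σ` a possibly degenerate fan with `|Σ| = |Δ|` (recorded by its
maximal cones `MC`) such that `X_Σ` is quasiprojective (`hqproj`: existence of a
strictly upper convex `Σ`-piecewise linear function) and every cone of `Σ` is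
positively spanned by rays in `Δ(1) \ I`.  For an effective `T`-ℚ-Weil divisor
`D = Σ d_ρ D_ρ` the following are equivalent:
(i) `[D] ∈ γ_{Σ,I}`, i.e. `Σ` refines `Σ_D` (the support function `Ξ_D` is linear on
each cone of `Σ`) and `I_D ⊆ I` (`Ξ_D(v_ρ) = -d_ρ` for `ρ ∉ I`);
(ii) there is an upper convex function `Ξ`, linear on each maximal cone of `Σ`, with
`Ξ(v_ρ) ≥ -d_ρ` for all `ρ`, with equality for `ρ ∉ I`;
(iii) some divisor `D̃ = D + div(χ^u)` linearly equivalent to `D` decomposes as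
`D̃ = φ_Σ(D') + E` with `D'` a nef `T`-ℚ-Cartier divisor on `X_Σ` (an upper convex
`Σ`-linear support function `Ψ`), `P_{D̃} = P_{D'}`, and `E` effective with support
contained in `∪_{ρ ∈ I} D_ρ`. -/
theorem gkz_lemma_membership_characterization
    (n r : ℕ) (v : Fin r → Fin n → ℤ) (d : Fin r → ℝ)
    (supp : Set (Fin n → ℝ)) (hconv : Convex ℝ supp)
    (hfulldim : (interior supp).Nonempty)
    (hrays : ∀ i, (fun j => (v i j : ℝ)) ∈ supp)
    (I : Finset (Fin r))
    (MC : Finset (Set (Fin n → ℝ)))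
    (hcover : (⋃ σ ∈ MC, σ) = supp)
    (hspanned : ∀ σ ∈ MC, ∃ T : Finset (Fin r), (∀ i ∈ T, i ∉ I) ∧ σ = coneOf v T)
    (hqproj : ∃ Θ : (Fin n → ℝ) → ℝ, UpperConvexOn supp Θ ∧
      ∀ σ ∈ MC, ∃ u : Fin n → ℝ, (∀ w ∈ σ, Θ w = ∑ j, u j * w j) ∧
        ∀ w ∈ supp, w ∉ σ → Θ w < ∑ j, u j * w j)
    (hne : (PolyOf v d).Nonempty) :
    ((PiecewiseLinearOn MC (XiD v d) ∧
        ∀ i ∉ I, XiD v d (fun j => (v i j : ℝ)) = -(d i)) ↔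
      (∃ Ξ : (Fin n → ℝ) → ℝ, UpperConvexOn supp Ξ ∧ PiecewiseLinearOn MC Ξ ∧
        (∀ i, -(d i) ≤ Ξ (fun j => (v i j : ℝ))) ∧
        (∀ i ∉ I, Ξ (fun j => (v i j : ℝ)) = -(d i)))) ∧
    ((∃ Ξ : (Fin n → ℝ) → ℝ, UpperConvexOn supp Ξ ∧ PiecewiseLinearOn MC Ξ ∧
        (∀ i, -(d i) ≤ Ξ (fun j => (v i j : ℝ))) ∧
        (∀ i ∉ I, Ξ (fun j => (v i j : ℝ)) = -(d i))) ↔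
      (∃ (uu : Fin n → ℝ) (Ψ : (Fin n → ℝ) → ℝ) (e : Fin r → ℝ),
        UpperConvexOn supp Ψ ∧ PiecewiseLinearOn MC Ψ ∧
        (∀ i, 0 ≤ e i) ∧ (∀ i ∉ I, e i = 0) ∧
        (∀ i, d i + ∑ j, uu j * (v i j : ℝ) = -(Ψ (fun j => (v i j : ℝ))) + e i) ∧
        PolyOf v (fun i => d i + ∑ j, uu j * (v i j : ℝ))
          = {x : Fin n → ℝ | ∀ w ∈ supp, Ψ w ≤ ∑ j, x j * w j})) := by
  classical
  clear hqproj
  have himg : ∀ w : Fin n → ℝ, ((fun u => ∑ j, u j * w j) '' PolyOf v d).Nonempty :=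
    fun w => hne.image _
  have hrep : ∀ x ∈ supp, ∃ cf : Fin r → ℝ, (∀ i, 0 ≤ cf i) ∧
      x = ∑ i, cf i • (fun j => (v i j : ℝ)) := by
    intro x hx
    rw [← hcover] at hx
    simp only [Set.mem_iUnion, exists_prop] at hx
    obtain ⟨σ, hσ, hxσ⟩ := hx
    obtain ⟨T, hTI, rfl⟩ := hspanned σ hσ
    obtain ⟨cf, h0, hz, hr⟩ := hxσ
    exact ⟨cf, h0, hr⟩
  have hbdd : ∀ x ∈ supp, BddBelow ((fun u => ∑ j, u j * x j) '' PolyOf v d) := by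
    intro x hx
    obtain ⟨cf, h0, hr⟩ := hrep x hx
    refine ⟨∑ i, cf i * (-(d i)), ?_⟩
    rintro y ⟨u, hu, rfl⟩
    show ∑ i, cf i * (-(d i)) ≤ ∑ j, u j * x j
    rw [dot_sum_rep v u x cf hr]
    exact Finset.sum_le_sum fun i _ => mul_le_mul_of_nonneg_left (hu i) (h0 i)
  have hXlow : ∀ i, -(d i) ≤ XiD v d (fun j => (v i j : ℝ)) := by
    intro i
    refine le_csInf (himg _) ?_
    rintro y ⟨u, hu, rfl⟩
    simpa using hu i
  have hXconvex : UpperConvexOn supp (XiD v d) := by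
    intro x hx y hy a b ha hb hab
    refine le_csInf (himg _) ?_
    rintro z ⟨u, hu, rfl⟩
    show a * XiD v d x + b * XiD v d y ≤ ∑ j, u j * (a • x + b • y) j
    rw [dot_combo u x y a b]
    have h1 : XiD v d x ≤ ∑ j, u j * x j := csInf_le (hbdd x hx) ⟨u, hu, rfl⟩
    have h2 : XiD v d y ≤ ∑ j, u j * y j := csInf_le (hbdd y hy) ⟨u, hu, rfl⟩
    have h3 := mul_le_mul_of_nonneg_left h1 ha
    have h4 := mul_le_mul_of_nonneg_left h2 hb
    linarith
  -- the key inequality Ξ ≤ ⟨u,·⟩ on supp for u ∈ P, given data (ii)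
  have hkey : ∀ (Ξ : (Fin n → ℝ) → ℝ), PiecewiseLinearOn MC Ξ →
      (∀ i ∉ I, Ξ (fun j => (v i j : ℝ)) = -(d i)) →
      ∀ u ∈ PolyOf v d, ∀ w ∈ supp, Ξ w ≤ ∑ j, u j * w j := by
    intro Ξ hpl heqI u hu w hw
    rw [← hcover] at hw
    simp only [Set.mem_iUnion, exists_prop] at hw
    obtain ⟨σ, hσMC, hwσ⟩ := hw
    obtain ⟨T, hTI, rfl⟩ := hspanned σ hσMC
    obtain ⟨uσ, hlin⟩ := hpl _ hσMC
    exact xi_le_dot v d I Ξ heqI T hTI uσ hlin u hu w hwσ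
  have hσclosed : ∀ σ ∈ MC, IsClosed σ := by
    intro σ hσ
    obtain ⟨T, -, rfl⟩ := hspanned σ hσ
    exact isClosed_coneOf v T
  have hσsupp : ∀ σ ∈ MC, σ ⊆ supp := by
    intro σ hσ x hx
    rw [← hcover]
    simp only [Set.mem_iUnion, exists_prop]
    exact ⟨σ, hσ, hx⟩
  -- fat cones cover supp
  have hfat : ∀ w ∈ supp, ∃ σ ∈ MC, (interior σ).Nonempty ∧ w ∈ σ := by
    intro w hw
    by_contra hcon
    push_neg at hcon
    set U : Set (Fin n → ℝ) :=
      ⋃ σ ∈ MC.filter (fun σ => (interior σ).Nonempty), σ with hU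
    have hUclosed : IsClosed U :=
      isClosed_biUnion_finset fun σ hσ => hσclosed σ (Finset.mem_filter.mp hσ).1
    have hwU : w ∉ U := by
      intro hwU
      rw [hU] at hwU
      simp only [Set.mem_iUnion, exists_prop, Finset.mem_filter] at hwU
      obtain ⟨σ, ⟨hσ1, hσ2⟩, hσ3⟩ := hwU
      exact (hcon σ hσ1 hσ2) hσ3
    obtain ⟨p, hp⟩ := hfulldim
    obtain ⟨t, ht0, ht1, htU⟩ := shrink w p hUclosed.isOpen_compl hwU
    have hzint : t • p + (1 - t) • w ∈ interior supp :=
      hconv.combo_interior_self_mem_interior hp hw ht0 (by linarith) (by ring)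
    have hVsub : interior supp ∩ Uᶜ ⊆
        ⋃ σ ∈ MC.filter (fun σ => ¬(interior σ).Nonempty), σ := by
      rintro x ⟨hx1, hx2⟩
      have hxsupp : x ∈ supp := interior_subset hx1
      rw [← hcover] at hxsupp
      simp only [Set.mem_iUnion, exists_prop] at hxsupp
      obtain ⟨σ, hσ, hxσ⟩ := hxsupp
      by_cases hfatσ : (interior σ).Nonempty
      · refine absurd (?_ : x ∈ U) hx2
        rw [hU]
        simp only [Set.mem_iUnion, exists_prop, Finset.mem_filter]
        exact ⟨σ, ⟨hσ, hfatσ⟩, hxσ⟩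
      · simp only [Set.mem_iUnion, exists_prop, Finset.mem_filter]
        exact ⟨σ, ⟨hσ, hfatσ⟩, hxσ⟩
    have hsubint := interior_maximal hVsub (isOpen_interior.inter hUclosed.isOpen_compl)
    rw [interior_union_finset_empty _ _
      (fun σ hσ => hσclosed σ (Finset.mem_filter.mp hσ).1)
      (fun σ hσ => Set.not_nonempty_iff_eq_empty.mp (Finset.mem_filter.mp hσ).2)] at hsubint
    exact hsubint ⟨hzint, htU⟩
  -- domination for cones with nonempty interior
  have hdomfat : ∀ (Ξ : (Fin n → ℝ) → ℝ), UpperConvexOn supp Ξ →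
      ∀ σ ∈ MC, (interior σ).Nonempty →
      ∀ uσ : Fin n → ℝ, (∀ w ∈ σ, Ξ w = ∑ j, uσ j * w j) →
      ∀ y ∈ supp, Ξ y ≤ ∑ j, uσ j * y j := by
    intro Ξ hcvx σ hσMC ⟨x₀, hx₀⟩ uσ hlin y hy
    obtain ⟨t, ht0, ht1, htmem⟩ := shrink x₀ y isOpen_interior hx₀
    have hzσ : t • y + (1 - t) • x₀ ∈ σ := interior_subset htmem
    have hx₀σ : x₀ ∈ σ := interior_subset hx₀
    have hcomb := hcvx y hy x₀ (hσsupp σ hσMC hx₀σ) t (1 - t) ht0.le (by linarith) (by ring)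
    have h3 : Ξ (t • y + (1 - t) • x₀)
        = t * (∑ j, uσ j * y j) + (1 - t) * (∑ j, uσ j * x₀ j) := by
      rw [hlin _ hzσ, dot_combo]
    rw [h3, hlin x₀ hx₀σ] at hcomb
    have h5 : t * Ξ y ≤ t * (∑ j, uσ j * y j) := by linarith
    exact le_of_mul_le_mul_left h5 ht0
  -- XiD = Ξ on supp, for any Ξ as in (ii)
  have hXeq : ∀ (Ξ : (Fin n → ℝ) → ℝ), UpperConvexOn supp Ξ → PiecewiseLinearOn MC Ξ →
      (∀ i, -(d i) ≤ Ξ (fun j => (v i j : ℝ))) →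
      (∀ i ∉ I, Ξ (fun j => (v i j : ℝ)) = -(d i)) →
      ∀ w ∈ supp, XiD v d w = Ξ w := by
    intro Ξ hcvx hpl hge heqI w hw
    have hle : Ξ w ≤ XiD v d w := by
      refine le_csInf (himg _) ?_
      rintro z ⟨u, hu, rfl⟩
      exact hkey Ξ hpl heqI u hu w hw
    have hge2 : XiD v d w ≤ Ξ w := by
      obtain ⟨σ, hσMC, hfatσ, hwσ⟩ := hfat w hw
      obtain ⟨uσ, hlin⟩ := hpl σ hσMC
      have hdom := hdomfat Ξ hcvx σ hσMC hfatσ uσ hlin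
      have huσP : uσ ∈ PolyOf v d := by
        intro i
        have h1 := hdom _ (hrays i)
        have h2 := hge i
        exact le_trans h2 (by simpa using h1)
      have h6 : XiD v d w ≤ ∑ j, uσ j * w j := csInf_le (hbdd w hw) ⟨uσ, huσP, rfl⟩
      rw [hlin w hwσ]
      exact h6
    exact le_antisymm hge2 hle
  constructor
  · -- Part 1
    constructor
    · rintro ⟨hplX, heqX⟩
      exact ⟨XiD v d, hXconvex, hplX, hXlow, heqX⟩
    · rintro ⟨Ξ, hcvx, hpl, hge, heqI⟩
      have hXeq' := hXeq Ξ hcvx hpl hge heqI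
      constructor
      · intro σ hσMC
        obtain ⟨uσ, hlin⟩ := hpl σ hσMC
        exact ⟨uσ, fun w hwσ => (hXeq' w (hσsupp σ hσMC hwσ)).trans (hlin w hwσ)⟩
      · intro i hi
        rw [hXeq' _ (hrays i), heqI i hi]
  · -- Part 2
    constructor
    · rintro ⟨Ξ, hcvx, hpl, hge, heqI⟩
      refine ⟨0, Ξ, fun i => d i + Ξ (fun j => (v i j : ℝ)), hcvx, hpl, ?_, ?_, ?_, ?_⟩
      · intro i
        show 0 ≤ d i + Ξ (fun j => (v i j : ℝ))
        have := hge i; linarith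
      · intro i hi
        show d i + Ξ (fun j => (v i j : ℝ)) = 0
        rw [heqI i hi]; ring
      · intro i
        show d i + ∑ j, (0 : Fin n → ℝ) j * (v i j : ℝ)
          = -(Ξ (fun j => (v i j : ℝ))) + (d i + Ξ (fun j => (v i j : ℝ)))
        simp only [Pi.zero_apply, zero_mul, Finset.sum_const_zero, add_zero]
        ring
      · have hd' : (fun i => d i + ∑ j, (0 : Fin n → ℝ) j * (v i j : ℝ)) = d := by
          funext i; simp
        rw [hd']
        ext x
        simp only [Set.mem_setOf_eq]
        constructor
        · intro hx w hw
          exact hkey Ξ hpl heqI x hx w hw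
        · intro hx i
          have h1 := hx _ (hrays i)
          have h2 := hge i
          exact le_trans h2 (by simpa using h1)
    · rintro ⟨uu, Ψ, e, hΨcvx, hΨpl, he0, heI, heqn, -⟩
      refine ⟨fun w => Ψ w + ∑ j, uu j * w j, ?_, ?_, ?_, ?_⟩
      · intro x hx y hy a b ha hb hab
        have h1 := hΨcvx x hx y hy a b ha hb hab
        have h2 := dot_combo uu x y a b
        show a * (Ψ x + ∑ j, uu j * x j) + b * (Ψ y + ∑ j, uu j * y j)
          ≤ Ψ (a • x + b • y) + ∑ j, uu j * (a • x + b • y) j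
        rw [h2]; nlinarith [h1]
      · intro σ hσ
        obtain ⟨u, hu⟩ := hΨpl σ hσ
        refine ⟨fun j => u j + uu j, fun w hw => ?_⟩
        show Ψ w + ∑ j, uu j * w j = ∑ j, (u j + uu j) * w j
        rw [hu w hw, ← Finset.sum_add_distrib]
        exact Finset.sum_congr rfl fun j _ => by ring
      · intro i
        have h := heqn i
        show -(d i) ≤ Ψ (fun j => (v i j : ℝ)) + ∑ j, uu j * (v i j : ℝ)
        have h2 := he0 i
        linarith
      · intro i hi
        have h := heqn i
        have h2 := heI i hi
        show Ψ (fun j => (v i j : ℝ)) + ∑ j, uu j * (v i j : ℝ) = -(d i)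
        rw [h2] at h
        linarith
end
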